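/- Let ℓ ≥ 3 and m ≥ 1 be integers with 2m ≤ ℓ, let {j_1,k_1},…,{j_m,k_m} ⊆ [ℓ] be distinct pairs, and let p > 0. If the 2m elements j_1,k_1,…,j_m,k_m are all distinct, then ℙ_p(⋂_{q=1}^m M_ℓ(j_q,k_q)) = 2^{2m}·(2^{ℓ−2m})^m·p^m·(1−p)^{2^ℓ−2^{ℓ−2m}−m}·P(ℓ−2m,p); otherwise ℙ_p(⋂_{q=1}^m M_ℓ(j_q,k_q)) = 0. -/

import Mathlib

/-- Adjacency in the grid graph `[n]^d`: two vertices are adjacent iff they differ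
by exactly 1 in a single coordinate. -/
def gridAdj (n d : ℕ) (x y : Fin d → Fin n) : Prop :=
  ∃ i, ((x i : ℕ) + 1 = (y i : ℕ) ∨ (y i : ℕ) + 1 = (x i : ℕ)) ∧ ∀ j, j ≠ i → x j = y j

/-- The grid graph `[n]^d`. -/
def gridGraph (n d : ℕ) : SimpleGraph (Fin d → Fin n) where
  Adj := gridAdj n d
  symm := by
    constructor
    rintro x y ⟨i, h1, h2⟩
    exact ⟨i, h1.symm, fun j hj => (h2 j hj).symm⟩
  loopless := by
    constructor
    rintro x ⟨i, h1, -⟩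
    omega

/-- Graph distance from a vertex to a set in the grid graph. -/
noncomputable def gridSetDist (n d : ℕ) (x : Fin d → Fin n) (S : Set (Fin d → Fin n)) : ℕ :=
  sInf (Set.image (fun y => (gridGraph n d).dist x y) S)

/-- One step of `r`-neighbour bootstrap percolation. -/
def bootStep {V : Type*} (adj : V → V → Prop) (r : ℕ) (A : Set V) : Set V :=
  A ∪ {v | r ≤ {u | adj v u ∧ u ∈ A}.ncard}

/-- The closure `[A]` of a set under `r`-neighbour bootstrap percolation. -/
def bootClosure {V : Type*} (adj : V → V → Prop) (r : ℕ) (A : Set V) : Set V :=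
  ⋃ t, (bootStep adj r)^[t] A

/-- The dimension of a cube in `[n]^d`: the sum over coordinates of
(number of values taken in that coordinate minus one). -/
noncomputable def cubeDim {n d : ℕ} (Q : Set (Fin d → Fin n)) : ℕ :=
  ∑ i : Fin d, ((Set.image (fun x => x i) Q).ncard - 1)

/-- A cube in `[n]^d` is a (nonempty) product of integer intervals. -/
def IsCube {n d : ℕ} (Q : Set (Fin d → Fin n)) : Prop :=
  ∃ lo hi : Fin d → Fin n, (∀ i, lo i ≤ hi i) ∧
    Q = {x | ∀ i, lo i ≤ x i ∧ x i ≤ hi i}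

/-- A hypercube in `[n]^d` is a cube all of whose sides have length 1 or 2,
i.e. a copy of some `[2]^m`. -/
def IsHypercube {n d : ℕ} (Q : Set (Fin d → Fin n)) : Prop :=
  ∃ lo hi : Fin d → Fin n, (∀ i, lo i ≤ hi i ∧ (hi i : ℕ) ≤ (lo i : ℕ) + 1) ∧
    Q = {x | ∀ i, lo i ≤ x i ∧ x i ≤ hi i}

/-- `Q` is internally spanned by `A`: the bootstrap closure of `A ∩ Q` is `Q`. -/
def IntSpans (n d : ℕ) (A Q : Set (Fin d → Fin n)) : Prop :=
  bootClosure (gridAdj n d) 2 (A ∩ Q) = Q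

/-- A set is constant on the coordinates in `J`. -/
def ConstOn {n d : ℕ} (J : Set (Fin d)) (C : Set (Fin d → Fin n)) : Prop :=
  ∀ i ∈ J, ∀ x ∈ C, ∀ y ∈ C, x i = y i

/-- `C` belongs to `Q⟨J⟩`: `C` is a maximal subcube of `Q` constant on the
coordinates in `J`. -/
def MaxConstSubcube (n d : ℕ) (Q : Set (Fin d → Fin n)) (J : Set (Fin d))
    (C : Set (Fin d → Fin n)) : Prop :=
  IsCube C ∧ C ⊆ Q ∧ ConstOn J C ∧
    ∀ C', IsCube C' → C' ⊆ Q → ConstOn J C' → C ⊆ C' → C' = C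

/-- `{j,k}` is a final pair for `A` in `Q`. -/
def FinalPair (n d : ℕ) (A Q : Set (Fin d → Fin n)) (j k : Fin d) : Prop :=
  IntSpans n d A Q ∧
    ∃ C, MaxConstSubcube n d Q {j, k} C ∧ IntSpans n d A C ∧ (A \ C).ncard = 1

/-- `{i}` is a final element for `A` in `Q`. -/
def FinalElt (n d : ℕ) (A Q : Set (Fin d → Fin n)) (i : Fin d) : Prop :=
  IntSpans n d A Q ∧
    ∃ C, MaxConstSubcube n d Q {i} C ∧ IntSpans n d A C ∧ (A \ C).ncard = 1

/-- `A` sequentially spans the hypercube `Q` (of dimension `2t`):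
`|A| = t+1` and `A` admits an ordering `(a 0, …, a t)` with
`dist (a (j+1), [{a 0,…,a j}]) = 2` for all `j < t`. -/
def SeqSpans (n d : ℕ) (A Q : Set (Fin d → Fin n)) : Prop :=
  ∃ t : ℕ, cubeDim Q = 2 * t ∧ A ⊆ Q ∧ A.ncard = t + 1 ∧
    bootClosure (gridAdj n d) 2 A = Q ∧
    ∃ a : Fin (t + 1) → (Fin d → Fin n), Function.Injective a ∧ Set.range a = A ∧
      ∀ j : Fin t, gridSetDist n d (a j.succ)
        (bootClosure (gridAdj n d) 2 (a '' {i | (i : ℕ) ≤ (j : ℕ)})) = 2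

/-- `{j,k}` is an ending for `A` (in the full cube): some `A' ⊆ A` sequentially
spans one of the maximal subcubes constant on `{j,k}`. -/
def EndingPair (n d : ℕ) (A : Set (Fin d → Fin n)) (j k : Fin d) : Prop :=
  ∃ A', A' ⊆ A ∧ ∃ C, MaxConstSubcube n d Set.univ {j, k} C ∧ SeqSpans n d A' C

/-- `Δ(b,C)`: the set of directions in which the vertex `b` and the cube `C`
are both constant and differ. -/
def Delta {n d : ℕ} (b : Fin d → Fin n) (C : Set (Fin d → Fin n)) : Set (Fin d) :=
  {i | (∀ x ∈ C, ∀ y ∈ C, x i = y i) ∧ ∀ x ∈ C, x i ≠ b i}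

/-- The probability of an event `E` for a random subset `A ~ Bin(V,p)`,
each element included independently with probability `p`. -/
noncomputable def binProb {V : Type*} [Fintype V] (p : ℝ) (E : Finset V → Prop) : ℝ :=
  ∑ A : Finset V,
    Set.indicator {B | E B} (fun B => p ^ B.card * (1 - p) ^ (Fintype.card V - B.card)) A

/-- The expectation of `f` for a random subset `A ~ Bin(V,p)`. -/
noncomputable def binExp {V : Type*} [Fintype V] (p : ℝ) (f : Finset V → ℝ) : ℝ :=
  ∑ A : Finset V, f A * (p ^ A.card * (1 - p) ^ (Fintype.card V - A.card))

/-- `P(ℓ,p)`: the probability that `A ~ Bin([2]^ℓ,p)` internally spans `[2]^ℓ`. -/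
noncomputable def Pprob (ℓ : ℕ) (p : ℝ) : ℝ :=
  binProb p (fun A : Finset (Fin ℓ → Fin 2) =>
    bootClosure (gridAdj 2 ℓ) 2 (↑A : Set (Fin ℓ → Fin 2)) = Set.univ)

/-- `Q(2ℓ,p)`: the probability that `A ~ Bin([2]^{2ℓ},p)` sequentially
internally spans `[2]^{2ℓ}`. -/
noncomputable def Qprob (ℓ : ℕ) (p : ℝ) : ℝ :=
  binProb p (fun A : Finset (Fin (2 * ℓ) → Fin 2) =>
    SeqSpans 2 (2 * ℓ) (↑A : Set (Fin (2 * ℓ) → Fin 2)) Set.univ)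

/-- `|𝒮(ℓ)|`: the number of `(ℓ+1)`-subsets of `[2]^{2ℓ}` which sequentially span it. -/
noncomputable def Scard (ℓ : ℕ) : ℕ :=
  {A : Set (Fin (2 * ℓ) → Fin 2) | SeqSpans 2 (2 * ℓ) A Set.univ}.ncard

/-- The probability that `A ~ Bin([n]^d,p)` percolates in `r`-neighbour
bootstrap percolation. -/
noncomputable def percProb (n d r : ℕ) (p : ℝ) : ℝ :=
  binProb p (fun A : Finset (Fin d → Fin n) =>
    bootClosure (gridAdj n d) r (↑A : Set (Fin d → Fin n)) = Set.univ)

/-- The critical probability `p_c([n]^d, r)`. -/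
noncomputable def pc (n d r : ℕ) : ℝ :=
  sInf {p : ℝ | 0 ≤ p ∧ p ≤ 1 ∧ 1 / 2 ≤ percProb n d r p}

/-- The series `x ↦ ∑_{k≥0} (-1)^k x^k / (2^{k²-k} k!)`, whose smallest positive
root is `λ ≈ 1.166`. -/
noncomputable def lamSeries (x : ℝ) : ℝ :=
  ∑' k : ℕ, (-1 : ℝ) ^ k * x ^ k / (2 ^ (k ^ 2 - k) * (Nat.factorial k))

/-!
Suppose the pairs `{j q, k q}` are disjoint and all final for `A`, with faces
`subcube {j q, k q} c_q` spanned by `A` and exceptional vertices `a q`. Since `A` spans `[2]^ℓ`,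
`a q` differs from its own face in both directions, and since a face is spanned from inside, `a q`
lies in every other face. So the patterns `c_q` glue to a pattern `c` on all pair coordinates,
and `A` is the union of the `a q` and a set `S` inside the subcube `D` of vertices following `c`.
A vertex at distance two from a face cannot help to infect inside it, so removing the `a q` one at
a time shows that `S` spans `D ≅ [2]^{ℓ-2m}`; conversely, adding them back to a spanning set of `D`
frees two coordinates at a time. Thus the event corresponds bijectively to the choices of `c` on
the pair coordinates, of the free coordinates of each `a q`, and of a spanning set of `D`.

If two distinct pairs share a coordinate, the exceptional vertex of the first lies in the face of
the second but not in its own, so the two faces are disjoint; but a face spanned by `A` meets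
every set containing all of `A` but one vertex.
-/

open Function Set

section Closure

variable {V : Type*} {adj : V → V → Prop}

def IsBootClosed (adj : V → V → Prop) (W : Set V) : Prop :=
  ∀ ⦃v u₁ u₂⦄, adj v u₁ → adj v u₂ → u₁ ∈ W → u₂ ∈ W → u₁ ≠ u₂ → v ∈ W

theorem subset_bootClosure (A : Set V) : A ⊆ bootClosure adj 2 A :=
  subset_iUnion (fun t => (bootStep adj 2)^[t] A) 0

theorem Set.Subsingleton.isBootClosed {W : Set V} (hW : W.Subsingleton) :
    IsBootClosed adj W :=
  fun _ _ _ _ _ h₁ h₂ hne => absurd (hW h₁ h₂) hne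

variable [Finite V]

theorem mem_bootStep_two_iff {A : Set V} {v : V} :
    v ∈ bootStep adj 2 A ↔
      v ∈ A ∨ ∃ u₁ u₂, adj v u₁ ∧ adj v u₂ ∧ u₁ ∈ A ∧ u₂ ∈ A ∧ u₁ ≠ u₂ := by
  refine or_congr Iff.rfl ((one_lt_ncard_iff (toFinite _)).trans ?_)
  aesop

theorem bootClosure_subset {A W : Set V} (hAW : A ⊆ W) (hW : IsBootClosed adj W) :
    bootClosure adj 2 A ⊆ W := by
  refine iUnion_subset fun t => ?_
  induction t with
  | zero => exact hAW
  | succ t ih =>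
    intro v hv
    rw [iterate_succ_apply', mem_bootStep_two_iff] at hv
    obtain hv | ⟨u₁, u₂, h₁, h₂, m₁, m₂, hne⟩ := hv
    · exact ih hv
    · exact hW h₁ h₂ (ih m₁) (ih m₂) hne

theorem isBootClosed_bootClosure (A : Set V) : IsBootClosed adj (bootClosure adj 2 A) := by
  have hmono : Monotone fun t => (bootStep adj 2)^[t] A :=
    monotone_nat_of_le_succ fun t => by
      rw [iterate_succ_apply']
      exact subset_union_left
  intro v u₁ u₂ h₁ h₂ m₁ m₂ hne
  obtain ⟨s₁, m₁⟩ := mem_iUnion.1 m₁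
  obtain ⟨s₂, m₂⟩ := mem_iUnion.1 m₂
  refine mem_iUnion.2 ⟨max s₁ s₂ + 1, ?_⟩
  rw [iterate_succ_apply', mem_bootStep_two_iff]
  exact Or.inr ⟨u₁, u₂, h₁, h₂, hmono (le_max_left _ _) m₁, hmono (le_max_right _ _) m₂,
    hne⟩

theorem mem_bootClosure_of_adj {A : Set V} {v u₁ u₂ : V} (h₁ : adj v u₁) (h₂ : adj v u₂)
    (m₁ : u₁ ∈ bootClosure adj 2 A) (m₂ : u₂ ∈ bootClosure adj 2 A) (hne : u₁ ≠ u₂) :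
    v ∈ bootClosure adj 2 A :=
  isBootClosed_bootClosure A h₁ h₂ m₁ m₂ hne

theorem bootClosure_mono {A B : Set V} (h : A ⊆ B) :
    bootClosure adj 2 A ⊆ bootClosure adj 2 B :=
  bootClosure_subset (h.trans (subset_bootClosure B)) (isBootClosed_bootClosure B)

theorem IsBootClosed.bootClosure_eq {W : Set V} (hW : IsBootClosed adj W) :
    bootClosure adj 2 W = W :=
  (bootClosure_subset subset_rfl hW).antisymm (subset_bootClosure W)

theorem bootClosure_bootClosure_union (X Y : Set V) :
    bootClosure adj 2 (bootClosure adj 2 X ∪ Y) = bootClosure adj 2 (X ∪ Y) := by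
  refine Subset.antisymm ?_ (bootClosure_mono (union_subset_union_left Y (subset_bootClosure X)))
  exact bootClosure_subset (union_subset (bootClosure_mono subset_union_left)
    (subset_union_right.trans (subset_bootClosure _))) (isBootClosed_bootClosure _)

theorem bootClosure_image {W : Type*} [Finite W] {adj' : W → W → Prop} {e : V → W}
    (he : Injective e) (hadj : ∀ x y, adj' (e x) (e y) ↔ adj x y)
    (hrange : IsBootClosed adj' (range e)) (X : Set V) :
    bootClosure adj' 2 (e '' X) = e '' bootClosure adj 2 X := by
  refine (bootClosure_subset (image_mono (subset_bootClosure X)) ?_).antisymm ?_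
  · rintro v - - h₁ h₂ ⟨y₁, m₁, rfl⟩ ⟨y₂, m₂, rfl⟩ hne
    obtain ⟨y, rfl⟩ := hrange h₁ h₂ ⟨y₁, rfl⟩ ⟨y₂, rfl⟩ hne
    exact mem_image_of_mem e (mem_bootClosure_of_adj ((hadj _ _).1 h₁) ((hadj _ _).1 h₂) m₁ m₂
      (ne_of_apply_ne e hne))
  · rw [image_subset_iff]
    refine bootClosure_subset (image_subset_iff.1 (subset_bootClosure _)) ?_
    intro y y₁ y₂ h₁ h₂ m₁ m₂ hne
    exact mem_bootClosure_of_adj ((hadj _ _).2 h₁) ((hadj _ _).2 h₂) m₁ m₂ (he.ne hne)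

theorem Set.Nontrivial.inter_nonempty_of_bootClosure_eq {A K K' : Set V} {a : V}
    (hK : K.Nontrivial) (hspan : bootClosure adj 2 (A ∩ K) = K) (ha : A \ K' = {a}) :
    (K ∩ K').Nonempty := by
  by_contra h
  have hsub : A ∩ K ⊆ {a} := fun y ⟨hy, hyK⟩ => ha ▸ ⟨hy, fun hyK' => h ⟨y, hyK, hyK'⟩⟩
  have hss := (subsingleton_singleton (a := a)).anti hsub
  rw [hss.isBootClosed.bootClosure_eq] at hspan
  exact hK.not_subsingleton (hspan ▸ hss)

end Closure

def subcube {ι α : Type*} (J : Set ι) (c : ι → α) : Set (ι → α) :=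
  {x | ∀ i ∈ J, x i = c i}

section Subcube

variable {ι α : Type*} {J J' : Set ι} {c c' x : ι → α}

@[simp] theorem mem_subcube : x ∈ subcube J c ↔ ∀ i ∈ J, x i = c i := Iff.rfl

@[simp] theorem subcube_empty (c : ι → α) : subcube ∅ c = univ := by
  ext; simp

theorem subcube_anti (h : J ⊆ J') : subcube J' c ⊆ subcube J c :=
  fun _ hx i hi => hx i (h hi)

theorem self_mem_subcube (J : Set ι) (c : ι → α) : c ∈ subcube J c := fun _ _ => rfl

theorem subcube_nontrivial [Nontrivial α] {t : ι} (ht : t ∉ J) :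
    (subcube J c).Nontrivial := by
  classical
  obtain ⟨v, hv⟩ := exists_ne (c t)
  refine ⟨update c t v, fun i hi => update_of_ne (ne_of_mem_of_not_mem hi ht) _ _,
    c, self_mem_subcube J c, fun h => hv (by simpa using congrFun h t)⟩

theorem not_subcube_subset [Nontrivial α] {t : ι} (ht : t ∈ J') (ht' : t ∉ J) :
    ¬ subcube J c ⊆ subcube J' c' := by
  classical
  obtain ⟨v, hv⟩ := exists_ne (c' t)
  intro h
  have := h (fun i hi => update_of_ne (ne_of_mem_of_not_mem hi ht') v c) t ht
  simp [hv] at this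

end Subcube

theorem isBootClosed_subcube {n d : ℕ} (J : Set (Fin d)) (c : Fin d → Fin n) :
    IsBootClosed (gridAdj n d) (subcube J c) := by
  rintro v u₁ u₂ ⟨i₁, -, h₁⟩ ⟨i₂, -, h₂⟩ m₁ m₂ hne
  by_contra hv
  obtain ⟨i, hi, hvi⟩ : ∃ i ∈ J, v i ≠ c i := by simpa using hv
  have hi₁ : i₁ = i := by_contra fun h => hvi ((h₁ i (Ne.symm h)).trans (m₁ i hi))
  have hi₂ : i₂ = i := by_contra fun h => hvi ((h₂ i (Ne.symm h)).trans (m₂ i hi))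
  refine hne (funext fun t => ?_)
  by_cases ht : t = i
  · rw [ht, m₁ i hi, m₂ i hi]
  · rw [← h₁ t (hi₁ ▸ ht), ← h₂ t (hi₂ ▸ ht)]

section Hypercube

variable {ℓ : ℕ}

theorem Fin.two_eq_of_ne_of_ne {a b c : Fin 2} (ha : a ≠ c) (hb : b ≠ c) : a = b := by
  revert a b c; decide

theorem Fin.two_add_one_ne (a : Fin 2) : a + 1 ≠ a := by
  revert a; decide

theorem Fin.two_eq_add_one_of_ne {a b : Fin 2} (h : b ≠ a) : b = a + 1 := by
  revert a b; decide

theorem Fin.exists_notMem_pair (hℓ : 3 ≤ ℓ) (j k : Fin ℓ) :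
    ∃ t, t ∉ ({j, k} : Set (Fin ℓ)) := by
  classical
  obtain ⟨t, -, ht⟩ := Finset.exists_mem_notMem_of_card_lt_card (s := {j, k})
    (t := Finset.univ) (by simpa using Finset.card_le_two.trans_lt (by omega))
  exact ⟨t, by simpa using ht⟩

theorem gridAdj_two_iff {x y : Fin ℓ → Fin 2} :
    gridAdj 2 ℓ x y ↔ ∃ i, x i ≠ y i ∧ ∀ t, t ≠ i → x t = y t := by
  refine exists_congr fun i => and_congr_left fun _ => ?_
  rw [Ne, Fin.ext_iff]
  omega

theorem gridAdj_symm {n : ℕ} {x y : Fin ℓ → Fin n} (h : gridAdj n ℓ x y) :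
    gridAdj n ℓ y x :=
  (gridGraph n ℓ).adj_symm h

theorem gridAdj_update {x : Fin ℓ → Fin 2} {i : Fin ℓ} {v : Fin 2} (h : v ≠ x i) :
    gridAdj 2 ℓ x (update x i v) :=
  gridAdj_two_iff.2 ⟨i, by simpa using h.symm, fun t ht => (update_of_ne ht _ _).symm⟩

end Hypercube

section Growth

variable {ℓ : ℕ} {W : Set (Fin ℓ → Fin 2)} {J : Set (Fin ℓ)} {c : Fin ℓ → Fin 2}

theorem subcube_diff_singleton_subset (hW : IsBootClosed (gridAdj 2 ℓ) W)
    (hJ : subcube J c ⊆ W) {i : Fin ℓ} (hi : i ∈ J) {u : Fin ℓ → Fin 2} (huW : u ∈ W)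
    (hu : u ∈ subcube (J \ {i}) c) (hui : u i ≠ c i) : subcube (J \ {i}) c ⊆ W := by
  classical
  -- induction on the coordinates where `x` differs from `u`: a vertex `x ≠ u` has the infected
  -- neighbours `update x t (u t)`, closer to `u`, and `update x i (c i) ∈ subcube J c`
  suffices key : ∀ s : Finset (Fin ℓ), ∀ x ∈ subcube (J \ {i}) c, x i = u i →
      (∀ t, x t ≠ u t → t ∈ s) → x ∈ W by
    intro x hx
    by_cases hxi : x i = c i
    · exact hJ fun t ht => if h : t = i then h ▸ hxi else hx t ⟨ht, h⟩
    · exact key Finset.univ x hx (Fin.two_eq_of_ne_of_ne hxi hui) fun t _ => Finset.mem_univ t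
  intro s
  induction s using Finset.induction_on with
  | empty =>
    intro x _ _ hs
    obtain rfl : x = u := funext fun t => by_contra fun h => by simpa using hs t h
    exact huW
  | insert t s _ ih =>
    intro x hx hxi hs
    by_cases hxt : x t = u t
    · refine ih x hx hxi fun t' h => (Finset.mem_insert.1 (hs t' h)).resolve_left ?_
      rintro rfl
      exact h hxt
    have hti : t ≠ i := by rintro rfl; exact hxt hxi
    have htJ : t ∉ J := fun h => hxt ((hx t ⟨h, hti⟩).trans (hu t ⟨h, hti⟩).symm)
    have h₁ : update x t (u t) ∈ W := by
      refine ih _ (fun t' ht' => ?_) (by rw [update_of_ne hti.symm, hxi]) fun t' h => ?_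
      · rw [update_of_ne (ne_of_mem_of_not_mem ht'.1 htJ)]
        exact hx t' ht'
      · have ht' : t' ≠ t := by rintro rfl; simp at h
        rw [update_of_ne ht'] at h
        exact (Finset.mem_insert.1 (hs t' h)).resolve_left ht'
    have h₂ : update x i (c i) ∈ W := hJ fun t' ht' => by
      by_cases h : t' = i
      · rw [h, update_self]
      · rw [update_of_ne h]
        exact hx t' ⟨ht', h⟩
    refine hW (gridAdj_update (Ne.symm hxt)) (gridAdj_update (hxi ▸ hui.symm)) h₁ h₂
      fun h => ?_
    have := congrFun h i
    rw [update_of_ne hti.symm, update_self, hxi] at this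
    exact hui this

theorem subcube_diff_pair_subset_bootClosure {j k : Fin ℓ} (hj : j ∈ J) (hk : k ∈ J)
    (hjk : j ≠ k) {b : Fin ℓ → Fin 2} (hb : b ∈ subcube (J \ {j, k}) c) (hbj : b j ≠ c j)
    (hbk : b k ≠ c k) :
    subcube (J \ {j, k}) c ⊆ bootClosure (gridAdj 2 ℓ) 2 (subcube J c ∪ {b}) := by
  set W := bootClosure (gridAdj 2 ℓ) 2 (subcube J c ∪ {b})
  have hW : IsBootClosed (gridAdj 2 ℓ) W := isBootClosed_bootClosure _
  have hJ : subcube J c ⊆ W := subset_union_left.trans (subset_bootClosure _)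
  have hbW : b ∈ W := subset_bootClosure _ (Or.inr rfl)
  -- `update b k (c k)` is infected, and differs from `subcube J c` only in direction `j`
  have hu : update b k (c k) ∈ subcube (J \ {j}) c := fun t ⟨ht, htj⟩ => by
    by_cases htk : t = k
    · rw [htk, update_self]
    · rw [update_of_ne htk]
      exact hb t ⟨ht, by simp_all⟩
  have huj : update b k (c k) j ≠ c j := by rwa [update_of_ne hjk]
  have huW : update b k (c k) ∈ W := by
    refine hW (gridAdj_update huj.symm) (gridAdj_symm (gridAdj_update (Ne.symm hbk)))
      (hJ fun t ht => ?_) hbW fun h => hbj ?_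
    · by_cases htj : t = j
      · rw [htj, update_self]
      · rw [update_of_ne htj]
        exact hu t ⟨ht, htj⟩
    · rw [← h, update_self]
  have hJj := subcube_diff_singleton_subset hW hJ hj huW hu huj
  rw [show J \ {j, k} = (J \ {j}) \ {k} by rw [sdiff_sdiff, singleton_union]] at hb ⊢
  exact subcube_diff_singleton_subset hW hJj ⟨hk, hjk.symm⟩ hbW hb hbk

end Growth

section Stripping

variable {ℓ : ℕ} {J : Set (Fin ℓ)} [∀ i, Decidable (i ∈ J)] {c : Fin ℓ → Fin 2}

theorem piecewise_eq_of_mem_subcube {x : Fin ℓ → Fin 2} (hx : x ∈ subcube J c) :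
    J.piecewise c x = x :=
  funext fun i => by by_cases hi : i ∈ J <;> simp [hi, hx i]

theorem isBootClosed_preimage_piecewise {W : Set (Fin ℓ → Fin 2)}
    (hW : IsBootClosed (gridAdj 2 ℓ) W) :
    IsBootClosed (gridAdj 2 ℓ) {x | J.piecewise c x ∈ W} := by
  intro v u₁ u₂ h₁ h₂ m₁ m₂ hne
  obtain ⟨i₁, d₁, e₁⟩ := gridAdj_two_iff.1 h₁
  obtain ⟨i₂, d₂, e₂⟩ := gridAdj_two_iff.1 h₂
  have hfixed : ∀ {u i}, (∀ t, t ≠ i → v t = u t) → i ∈ J →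
      J.piecewise c u = J.piecewise c v :=
    fun {u i} e hi => funext fun t => by
      by_cases ht : t ∈ J
      · simp [ht]
      · simp [ht, e t (ne_of_mem_of_not_mem hi ht).symm]
  by_cases hi₁ : i₁ ∈ J
  · show J.piecewise c v ∈ W
    exact hfixed e₁ hi₁ ▸ m₁
  by_cases hi₂ : i₂ ∈ J
  · show J.piecewise c v ∈ W
    exact hfixed e₂ hi₂ ▸ m₂
  have hadj : ∀ {u i}, v i ≠ u i → (∀ t, t ≠ i → v t = u t) → i ∉ J →
      gridAdj 2 ℓ (J.piecewise c v) (J.piecewise c u) := fun {u i} d e hi =>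
    gridAdj_two_iff.2 ⟨i, by simpa [hi] using d, fun t ht => by
      by_cases htJ : t ∈ J <;> simp [htJ, e t ht]⟩
  refine hW (hadj d₁ e₁ hi₁) (hadj d₂ e₂ hi₂) m₁ m₂ fun h => hne (funext fun t => ?_)
  by_cases ht : t ∈ J
  · rw [← e₁ t (ne_of_mem_of_not_mem ht hi₁), ← e₂ t (ne_of_mem_of_not_mem ht hi₂)]
  · simpa [ht] using congrFun h t

theorem eq_piecewise_of_gridAdj {j k : Fin ℓ} (hjk : j ≠ k) {u b v : Fin ℓ → Fin 2}
    (hu : u ∈ subcube {j, k} c) (hbj : b j ≠ c j) (hbk : b k ≠ c k)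
    (h₁ : gridAdj 2 ℓ v u) (h₂ : gridAdj 2 ℓ v b) :
    u = ({j, k} : Set (Fin ℓ)).piecewise c b := by
  obtain ⟨s, -, hs⟩ := gridAdj_two_iff.1 h₁
  obtain ⟨t, -, ht⟩ := gridAdj_two_iff.1 h₂
  have huj : u j = c j := hu j (by simp)
  have huk : u k = c k := hu k (by simp)
  have hj : j = s ∨ j = t := by
    by_contra! h
    exact hbj (((ht j h.2).symm.trans (hs j h.1)).trans huj)
  have hk : k = s ∨ k = t := by
    by_contra! h
    exact hbk (((ht k h.2).symm.trans (hs k h.1)).trans huk)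
  funext i
  by_cases hi : i ∈ ({j, k} : Set (Fin ℓ))
  · rw [piecewise_eq_of_mem _ _ _ hi]
    exact hu i hi
  · simp only [mem_insert_iff, mem_singleton_iff, not_or] at hi
    rw [piecewise_eq_of_notMem _ _ _ (by simp [hi]), ← hs i (by grind), ht i (by grind)]

theorem bootClosure_union_singleton_inter_subcube_subset {j k : Fin ℓ} (hjk : j ≠ k)
    {Z : Set (Fin ℓ → Fin 2)} (hZ : Z ⊆ subcube {j, k} c) {b : Fin ℓ → Fin 2}
    (hbj : b j ≠ c j) (hbk : b k ≠ c k) :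
    bootClosure (gridAdj 2 ℓ) 2 (Z ∪ {b}) ∩ subcube {j, k} c ⊆
      bootClosure (gridAdj 2 ℓ) 2 Z := by
  set W := bootClosure (gridAdj 2 ℓ) 2 Z
  have hW : IsBootClosed (gridAdj 2 ℓ) W := isBootClosed_bootClosure Z
  by_cases hpb : ({j, k} : Set (Fin ℓ)).piecewise c b ∈ W
  · -- the cylinder over `W` is closed and contains `Z ∪ {b}`
    have hsub : bootClosure (gridAdj 2 ℓ) 2 (Z ∪ {b}) ⊆
        {x | ({j, k} : Set (Fin ℓ)).piecewise c x ∈ W} := by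
      refine bootClosure_subset (union_subset (fun z hz => ?_) (singleton_subset_iff.2 hpb))
        (isBootClosed_preimage_piecewise hW)
      show _ ∈ W
      rw [piecewise_eq_of_mem_subcube (hZ hz)]
      exact subset_bootClosure Z hz
    rintro x ⟨hx, hxK⟩
    simpa [piecewise_eq_of_mem_subcube hxK] using hsub hx
  · -- otherwise `b` has no neighbour in common with `W`, so `insert b W` is closed
    have hclosed : IsBootClosed (gridAdj 2 ℓ) (insert b W) := by
      have hZW : W ⊆ subcube {j, k} c := bootClosure_subset hZ (isBootClosed_subcube _ _)
      rintro v u₁ u₂ h₁ h₂ (rfl | m₁) (rfl | m₂) hne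
      · exact absurd rfl hne
      · exact absurd (eq_piecewise_of_gridAdj hjk (hZW m₂) hbj hbk h₂ h₁ ▸ m₂) hpb
      · exact absurd (eq_piecewise_of_gridAdj hjk (hZW m₁) hbj hbk h₁ h₂ ▸ m₁) hpb
      · exact Or.inr (hW h₁ h₂ m₁ m₂ hne)
    rintro x ⟨hx, hxK⟩
    obtain rfl | hx := bootClosure_subset (union_subset (subset_bootClosure Z |>.trans
      (subset_insert b W)) (singleton_subset_iff.2 (mem_insert b W))) hclosed hx
    · exact absurd (hxK j (by simp)) hbj
    · exact hx

end Stripping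

theorem eq_of_diff_eq_singleton {α : Type*} {A K : Set α} {a y : α} (ha : A \ K = {a})
    (hy : y ∈ A) (hyK : y ∉ K) : y = a := by
  rw [← mem_singleton_iff, ← ha]
  exact ⟨hy, hyK⟩

section FinalPairs

theorem isCube_subcube {n d : ℕ} [NeZero n] (J : Set (Fin d)) (c : Fin d → Fin n) :
    IsCube (subcube J c) := by
  classical
  refine ⟨fun i => if i ∈ J then c i else ⊥, fun i => if i ∈ J then c i else ⊤,
    fun i => by dsimp only; split_ifs <;> simp, ?_⟩
  ext x
  refine forall_congr' fun i => ?_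
  by_cases hi : i ∈ J <;> simp [hi, le_antisymm_iff, and_comm]

theorem maxConstSubcube_univ_iff {n d : ℕ} [NeZero n] {J : Set (Fin d)}
    {C : Set (Fin d → Fin n)} : MaxConstSubcube n d univ J C ↔ ∃ c, C = subcube J c := by
  constructor
  · rintro ⟨⟨lo, hi, hle, rfl⟩, -, hconst, hmax⟩
    have hlo : lo ∈ {x | ∀ i, lo i ≤ x i ∧ x i ≤ hi i} := fun i => ⟨le_rfl, hle i⟩
    refine ⟨lo, (hmax _ (isCube_subcube J lo) (subset_univ _) ?_ ?_).symm⟩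
    · exact fun i hi x hx y hy => (hx i hi).trans (hy i hi).symm
    · exact fun x hx i hi => hconst i hi x hx lo hlo
  · rintro ⟨c, rfl⟩
    refine ⟨isCube_subcube J c, subset_univ _,
      fun i hi x hx y hy => (hx i hi).trans (hy i hi).symm,
      fun C' _ _ hC' hsub => Subset.antisymm (fun x hx i hi => ?_) hsub⟩
    exact hC' i hi x hx c (hsub (self_mem_subcube J c))

variable {ℓ : ℕ} {A : Set (Fin ℓ → Fin 2)}

theorem finalPair_univ_iff {j k : Fin ℓ} :
    FinalPair 2 ℓ A univ j k ↔ bootClosure (gridAdj 2 ℓ) 2 A = univ ∧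
      ∃ c a, bootClosure (gridAdj 2 ℓ) 2 (A ∩ subcube {j, k} c) = subcube {j, k} c ∧
        A \ subcube {j, k} c = {a} := by
  simp only [FinalPair, IntSpans, inter_univ, maxConstSubcube_univ_iff, ncard_eq_one]
  aesop

theorem apply_ne_of_diff_subcube_eq_singleton (hA : bootClosure (gridAdj 2 ℓ) 2 A = univ)
    {J : Set (Fin ℓ)} {c a : Fin ℓ → Fin 2} (ha : A \ subcube J c = {a}) {i : Fin ℓ}
    (hi : i ∈ J) : a i ≠ c i := by
  intro hai
  have hsub : A ⊆ subcube {i} c := fun y hy t ht => by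
    rw [mem_singleton_iff.1 ht]
    by_cases hyJ : y ∈ subcube J c
    · exact hyJ i hi
    · rwa [eq_of_diff_eq_singleton ha hy hyJ]
  have := bootClosure_subset hsub (isBootClosed_subcube _ _)
  rw [hA, ← subcube_empty c] at this
  exact not_subcube_subset (mem_singleton i) (notMem_empty i) this

theorem mem_subcube_of_diff_subcube_eq_singleton {J J' : Set (Fin ℓ)}
    {c c' a a' : Fin ℓ → Fin 2}
    (hspan : bootClosure (gridAdj 2 ℓ) 2 (A ∩ subcube J c) = subcube J c)
    (ha : A \ subcube J c = {a}) (ha' : A \ subcube J' c' = {a'}) {t : Fin ℓ} (ht : t ∈ J')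
    (ht' : t ∉ J) : a ∈ subcube J' c' := by
  have haA : a ∈ A \ subcube J c := ha ▸ mem_singleton a
  by_contra h
  obtain rfl := eq_of_diff_eq_singleton ha' haA.1 h
  -- otherwise `A ∩ subcube J c` lies in the closed set `subcube J' c'`, and so would its span
  have hsub : A ∩ subcube J c ⊆ subcube J' c' := fun y ⟨hy, hyJ⟩ => by
    by_contra hyJ'
    exact haA.2 (eq_of_diff_eq_singleton ha' hy hyJ' ▸ hyJ)
  have := bootClosure_subset hsub (isBootClosed_subcube _ _)
  rw [hspan] at this
  exact not_subcube_subset ht ht' this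

theorem not_finalPair_of_mem_of_notMem {j k j' k' i t : Fin ℓ}
    (hi : i ∈ ({j, k} : Set (Fin ℓ)) ∩ {j', k'}) (ht : t ∈ ({j', k'} : Set (Fin ℓ)))
    (ht' : t ∉ ({j, k} : Set (Fin ℓ))) (h : FinalPair 2 ℓ A univ j k) :
    ¬ FinalPair 2 ℓ A univ j' k' := by
  intro h'
  obtain ⟨hA, c, a, hspan, ha⟩ := finalPair_univ_iff.1 h
  obtain ⟨-, c', a', -, ha'⟩ := finalPair_univ_iff.1 h'
  have hac' := mem_subcube_of_diff_subcube_eq_singleton hspan ha ha' ht ht' i hi.2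
  obtain ⟨y, hy, hy'⟩ := (subcube_nontrivial ht').inter_nonempty_of_bootClosure_eq hspan ha'
  exact apply_ne_of_diff_subcube_eq_singleton hA ha hi.1
    (hac'.trans ((hy' i hi.2).symm.trans (hy i hi.1)))

end FinalPairs

section PairConfig

variable {ℓ m : ℕ} {j k : Fin m → Fin ℓ}

def pairCoords (j k : Fin m → Fin ℓ) (R : Set (Fin m)) : Set (Fin ℓ) := j '' R ∪ k '' R

theorem mem_subcube_pairCoords {R : Set (Fin m)} {c x : Fin ℓ → Fin 2} :
    x ∈ subcube (pairCoords j k R) c ↔ ∀ q ∈ R, x (j q) = c (j q) ∧ x (k q) = c (k q) := by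
  simp only [mem_subcube, pairCoords, mem_union, mem_image]
  constructor
  · exact fun h q hq => ⟨h _ (Or.inl ⟨q, hq, rfl⟩), h _ (Or.inr ⟨q, hq, rfl⟩)⟩
  · rintro h _ (⟨q, hq, rfl⟩ | ⟨q, hq, rfl⟩)
    exacts [(h q hq).1, (h q hq).2]

@[simp] theorem pairCoords_singleton (q : Fin m) : pairCoords j k {q} = {j q, k q} := by
  simp only [pairCoords, image_singleton, singleton_union]

@[simp] theorem pairCoords_empty : pairCoords j k ∅ = ∅ := by simp [pairCoords]

theorem pairCoords_mono {R R' : Set (Fin m)} (h : R ⊆ R') :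
    pairCoords j k R ⊆ pairCoords j k R' :=
  union_subset_union (image_mono h) (image_mono h)

theorem pairCoords_diff_singleton (hj : Injective j) (hk : Injective k)
    (hjk : ∀ q q', j q ≠ k q') (R : Set (Fin m)) (q : Fin m) :
    pairCoords j k (R \ {q}) = pairCoords j k R \ {j q, k q} := by
  ext i
  simp only [pairCoords, mem_union, mem_image, mem_sdiff, mem_singleton_iff, mem_insert_iff]
  constructor
  · rintro (⟨q', ⟨hq', hne⟩, rfl⟩ | ⟨q', ⟨hq', hne⟩, rfl⟩)
    · exact ⟨Or.inl ⟨q', hq', rfl⟩, by simp [hj.ne hne, hjk]⟩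
    · exact ⟨Or.inr ⟨q', hq', rfl⟩, by simp [hk.ne hne, fun q => (hjk q q').symm]⟩
  · rintro ⟨⟨q', hq', rfl⟩ | ⟨q', hq', rfl⟩, hi⟩
    · exact Or.inl ⟨q', ⟨hq', fun h => hi (Or.inl (congrArg j h))⟩, rfl⟩
    · exact Or.inr ⟨q', ⟨hq', fun h => hi (Or.inr (congrArg k h))⟩, rfl⟩

def FlipsPairs (j k : Fin m → Fin ℓ) (c : Fin ℓ → Fin 2) (a : Fin m → Fin ℓ → Fin 2) :
    Prop :=
  ∀ q, a q ∈ subcube (pairCoords j k {q}ᶜ) c ∧ a q (j q) ≠ c (j q) ∧ a q (k q) ≠ c (k q)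

variable {c : Fin ℓ → Fin 2} {a : Fin m → Fin ℓ → Fin 2} {A : Set (Fin ℓ → Fin 2)}

theorem FlipsPairs.mem_subcube_pair (ha : FlipsPairs j k c a) {q q' : Fin m} (hq : q' ≠ q) :
    a q' ∈ subcube {j q, k q} c := by
  rw [← pairCoords_singleton]
  exact subcube_anti (pairCoords_mono (by simpa using hq)) (ha q').1

theorem FlipsPairs.notMem_subcube_pair (ha : FlipsPairs j k c a) (q : Fin m) :
    a q ∉ subcube {j q, k q} c :=
  fun h => (ha q).2.1 (h (j q) (by simp))

theorem FlipsPairs.injective (ha : FlipsPairs j k c a) : Injective a := fun q q' h => by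
  by_contra hne
  exact ha.notMem_subcube_pair q (h ▸ ha.mem_subcube_pair (Ne.symm hne))

theorem subcube_pairCoords_univ_subset (q : Fin m) :
    subcube (pairCoords j k univ) c ⊆ subcube {j q, k q} c := by
  rw [← pairCoords_singleton]
  exact subcube_anti (pairCoords_mono (subset_univ _))

theorem FlipsPairs.subcube_subset_bootClosure (ha : FlipsPairs j k c a) (hj : Injective j)
    (hk : Injective k) (hjk : ∀ q q', j q ≠ k q') {S : Set (Fin ℓ → Fin 2)}
    (hS : subcube (pairCoords j k univ) c ⊆ bootClosure (gridAdj 2 ℓ) 2 S)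
    (R : Finset (Fin m)) :
    subcube (pairCoords j k (↑R)ᶜ) c ⊆ bootClosure (gridAdj 2 ℓ) 2 (S ∪ a '' R) := by
  classical
  induction R using Finset.induction_on with
  | empty => simpa using hS
  | insert q R hq ih =>
    have hdiff : pairCoords j k (↑(insert q R))ᶜ = pairCoords j k (↑R)ᶜ \ {j q, k q} := by
      rw [← pairCoords_diff_singleton hj hk hjk]
      congr 1
      ext
      simp [and_comm]
    have hqR : q ∈ (↑R : Set (Fin m))ᶜ := hq
    have hb : a q ∈ subcube (pairCoords j k (↑(insert q R))ᶜ) c :=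
      subcube_anti (pairCoords_mono (by simp)) (ha q).1
    rw [hdiff] at hb ⊢
    refine (subcube_diff_pair_subset_bootClosure (Or.inl ⟨q, hqR, rfl⟩) (Or.inr ⟨q, hqR, rfl⟩)
      (hjk q q) hb (ha q).2.1 (ha q).2.2).trans ?_
    rw [Finset.coe_insert, image_insert_eq, union_insert, ← union_singleton,
      ← bootClosure_bootClosure_union (S ∪ _)]
    exact bootClosure_mono (union_subset_union_left _ ih)

theorem FlipsPairs.bootClosure_union_image_inter_subset (ha : FlipsPairs j k c a)
    (hjk : ∀ q q', j q ≠ k q') {S : Set (Fin ℓ → Fin 2)}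
    (hS : S ⊆ subcube (pairCoords j k univ) c) (R : Finset (Fin m)) :
    bootClosure (gridAdj 2 ℓ) 2 (S ∪ a '' R) ∩ subcube (pairCoords j k univ) c ⊆
      bootClosure (gridAdj 2 ℓ) 2 S := by
  classical
  induction R using Finset.induction_on with
  | empty => simp
  | insert q R hq ih =>
    rintro x ⟨hx, hxD⟩
    have hZ : S ∪ a '' R ⊆ subcube {j q, k q} c := by
      refine union_subset (hS.trans (subcube_pairCoords_univ_subset q)) ?_
      rintro _ ⟨q', hq', rfl⟩
      exact ha.mem_subcube_pair (ne_of_mem_of_not_mem hq' hq)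
    rw [Finset.coe_insert, image_insert_eq, union_insert, ← union_singleton] at hx
    refine ih ⟨bootClosure_union_singleton_inter_subcube_subset (hjk q q) hZ (ha q).2.1
      (ha q).2.2 ⟨hx, subcube_pairCoords_univ_subset q hxD⟩, hxD⟩

theorem FlipsPairs.bootClosure_inter_subcube_eq (ha : FlipsPairs j k c a)
    (hjk : ∀ q q', j q ≠ k q') (hA : A ⊆ subcube (pairCoords j k univ) c ∪ range a) {q : Fin m}
    (hspan : bootClosure (gridAdj 2 ℓ) 2 (A ∩ subcube {j q, k q} c) = subcube {j q, k q} c) :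
    bootClosure (gridAdj 2 ℓ) 2 (A ∩ subcube (pairCoords j k univ) c) =
      subcube (pairCoords j k univ) c := by
  classical
  refine (bootClosure_subset inter_subset_right (isBootClosed_subcube _ _)).antisymm
    fun x hx => ha.bootClosure_union_image_inter_subset hjk inter_subset_right
      (Finset.univ.erase q) ⟨?_, hx⟩
  have hxq := subcube_pairCoords_univ_subset q hx
  rw [← hspan] at hxq
  refine bootClosure_mono (fun y hy => ?_) hxq
  obtain ⟨hy, hyK⟩ := hy
  rcases hA hy with hyD | ⟨q', rfl⟩
  · exact Or.inl ⟨hy, hyD⟩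
  · refine Or.inr ⟨q', Finset.mem_erase.2 ⟨?_, Finset.mem_univ q'⟩, rfl⟩
    rintro rfl
    exact ha.notMem_subcube_pair q' hyK

structure IsPairConfig (j k : Fin m → Fin ℓ) (c : Fin ℓ → Fin 2) (a : Fin m → Fin ℓ → Fin 2)
    (A : Set (Fin ℓ → Fin 2)) : Prop where
  flipsPairs : FlipsPairs j k c a
  bootClosure_inter : bootClosure (gridAdj 2 ℓ) 2 (A ∩ subcube (pairCoords j k univ) c) =
    subcube (pairCoords j k univ) c
  subset_union : A ⊆ subcube (pairCoords j k univ) c ∪ range a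
  range_subset : range a ⊆ A

namespace IsPairConfig

theorem diff_subcube_pair (h : IsPairConfig j k c a A) (q : Fin m) :
    A \ subcube {j q, k q} c = {a q} := by
  ext y
  constructor
  · rintro ⟨hy, hyK⟩
    rcases h.subset_union hy with hyD | ⟨q', rfl⟩
    · exact absurd (subcube_pairCoords_univ_subset q hyD) hyK
    · by_contra hq
      exact hyK (h.flipsPairs.mem_subcube_pair fun h' => hq (h' ▸ rfl))
  · rintro rfl
    exact ⟨h.range_subset ⟨q, rfl⟩, h.flipsPairs.notMem_subcube_pair q⟩

theorem bootClosure_inter_subcube_pair (h : IsPairConfig j k c a A) (hj : Injective j)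
    (hk : Injective k) (hjk : ∀ q q', j q ≠ k q') (q : Fin m) :
    bootClosure (gridAdj 2 ℓ) 2 (A ∩ subcube {j q, k q} c) = subcube {j q, k q} c := by
  classical
  refine (bootClosure_subset inter_subset_right (isBootClosed_subcube _ _)).antisymm ?_
  have := h.flipsPairs.subcube_subset_bootClosure hj hk hjk h.bootClosure_inter.ge
    (Finset.univ.erase q)
  rw [show (↑(Finset.univ.erase q) : Set (Fin m))ᶜ = {q} by ext; simp,
    pairCoords_singleton] at this
  refine this.trans (bootClosure_mono (union_subset
    (inter_subset_inter_right _ (subcube_pairCoords_univ_subset q)) ?_))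
  rintro _ ⟨q', hq', rfl⟩
  exact ⟨h.range_subset ⟨q', rfl⟩, h.flipsPairs.mem_subcube_pair (Finset.ne_of_mem_erase hq')⟩

theorem bootClosure_eq_univ (h : IsPairConfig j k c a A) (hj : Injective j) (hk : Injective k)
    (hjk : ∀ q q', j q ≠ k q') : bootClosure (gridAdj 2 ℓ) 2 A = univ := by
  have := h.flipsPairs.subcube_subset_bootClosure hj hk hjk h.bootClosure_inter.ge Finset.univ
  simp only [Finset.coe_univ, compl_univ, pairCoords_empty, subcube_empty] at this
  refine eq_univ_of_univ_subset (this.trans (bootClosure_mono (union_subset inter_subset_left ?_)))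
  rintro _ ⟨q, -, rfl⟩
  exact h.range_subset ⟨q, rfl⟩

theorem finalPair (h : IsPairConfig j k c a A) (hj : Injective j) (hk : Injective k)
    (hjk : ∀ q q', j q ≠ k q') (q : Fin m) : FinalPair 2 ℓ A univ (j q) (k q) :=
  finalPair_univ_iff.2 ⟨h.bootClosure_eq_univ hj hk hjk, c, a q,
    h.bootClosure_inter_subcube_pair hj hk hjk q, h.diff_subcube_pair q⟩

end IsPairConfig

noncomputable def pairPattern (j k : Fin m → Fin ℓ) (e₁ e₂ : Fin m → Fin 2) :
    Fin ℓ → Fin 2 :=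
  extend j e₁ (extend k e₂ 0)

variable {e₁ e₂ : Fin m → Fin 2}

theorem pairPattern_left (hj : Injective j) (q : Fin m) :
    pairPattern j k e₁ e₂ (j q) = e₁ q :=
  hj.extend_apply _ _ _

theorem pairPattern_right (hk : Injective k) (hjk : ∀ q q', j q ≠ k q') (q : Fin m) :
    pairPattern j k e₁ e₂ (k q) = e₂ q := by
  rw [pairPattern, extend_apply' _ _ _ fun ⟨q', h⟩ => hjk q' q h, hk.extend_apply]

theorem exists_isPairConfig [NeZero m] (hj : Injective j) (hk : Injective k)
    (hjk : ∀ q q', j q ≠ k q') (hA : ∀ q, FinalPair 2 ℓ A univ (j q) (k q)) :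
    ∃ c a, IsPairConfig j k c a A := by
  classical
  have hAuniv := (finalPair_univ_iff.1 (hA 0)).1
  choose cs a hspan ha using fun q => (finalPair_univ_iff.1 (hA q)).2
  -- the faces fix disjoint pairs of coordinates, so their patterns glue to one pattern `c`
  set c := pairPattern j k (fun q => cs q (j q)) (fun q => cs q (k q))
  have hc : ∀ q, subcube {j q, k q} (cs q) = subcube {j q, k q} c := fun q => by
    ext x
    simp [c, pairPattern_left hj, pairPattern_right hk hjk]
  simp only [hc] at hspan ha
  have hflips : FlipsPairs j k c a := fun q => by
    refine ⟨mem_subcube_pairCoords.2 fun q' hq' => ?_,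
      apply_ne_of_diff_subcube_eq_singleton hAuniv (ha q) (by simp),
      apply_ne_of_diff_subcube_eq_singleton hAuniv (ha q) (by simp)⟩
    have hq : q' ≠ q := hq'
    have := mem_subcube_of_diff_subcube_eq_singleton (hspan q) (ha q) (ha q') (t := j q')
      (by simp) (by simp [hj.ne hq, hjk])
    exact ⟨this (j q') (by simp), this (k q') (by simp)⟩
  have hsub : A ⊆ subcube (pairCoords j k univ) c ∪ range a := fun y hy => by
    by_cases hya : y ∈ range a
    · exact Or.inr hya
    refine Or.inl (mem_subcube_pairCoords.2 fun q _ => ?_)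
    by_cases hyK : y ∈ subcube {j q, k q} c
    · exact ⟨hyK _ (by simp), hyK _ (by simp)⟩
    · exact absurd ⟨q, (eq_of_diff_eq_singleton (ha q) hy hyK).symm⟩ hya
  have hrange : range a ⊆ A := by
    rintro _ ⟨q, rfl⟩
    exact (ha q ▸ mem_singleton (a q) : a q ∈ A \ _).1
  exact ⟨c, a, hflips, hflips.bootClosure_inter_subcube_eq hjk hsub (hspan 0), hsub, hrange⟩

end PairConfig

section Embedding

variable {n d ℓ : ℕ} {σ : Fin d → Fin ℓ} {c : Fin ℓ → Fin n}

theorem gridAdj_extend_iff (hσ : Injective σ) {y y' : Fin d → Fin n} :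
    gridAdj n ℓ (extend σ y c) (extend σ y' c) ↔ gridAdj n d y y' := by
  constructor
  · rintro ⟨i, hi, he⟩
    obtain ⟨s, rfl⟩ : ∃ s, σ s = i := by
      by_contra h
      rw [extend_apply' _ _ _ h, extend_apply' _ _ _ h] at hi
      omega
    refine ⟨s, by simpa [hσ.extend_apply] using hi, fun t ht => ?_⟩
    simpa [hσ.extend_apply] using he (σ t) (hσ.ne ht)
  · rintro ⟨s, hs, he⟩
    refine ⟨σ s, by simpa [hσ.extend_apply] using hs, fun i hi => ?_⟩
    by_cases h : ∃ t, σ t = i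
    · obtain ⟨t, rfl⟩ := h
      simpa [hσ.extend_apply] using he t fun h => hi (h ▸ rfl)
    · rw [extend_apply' _ _ _ h, extend_apply' _ _ _ h]

theorem range_extend_eq_subcube (hσ : Injective σ) :
    range (fun y : Fin d → Fin n => extend σ y c) = subcube (range σ)ᶜ c := by
  ext x
  constructor
  · rintro ⟨y, rfl⟩ i hi
    exact extend_apply' _ _ _ hi
  · refine fun hx => ⟨x ∘ σ, funext fun i => ?_⟩
    show extend σ (x ∘ σ) c i = x i
    by_cases h : ∃ s, σ s = i
    · obtain ⟨s, rfl⟩ := h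
      exact hσ.extend_apply _ _ _
    · rw [extend_apply' _ _ _ h]
      exact (hx i h).symm

theorem bootClosure_image_extend_eq_iff (hσ : Injective σ) (T : Set (Fin d → Fin n)) :
    bootClosure (gridAdj n ℓ) 2 ((fun y => extend σ y c) '' T) = subcube (range σ)ᶜ c ↔
      bootClosure (gridAdj n d) 2 T = univ := by
  rw [bootClosure_image (extend_injective hσ c) (fun _ _ => gridAdj_extend_iff hσ)
    (range_extend_eq_subcube hσ ▸ isBootClosed_subcube _ _), ← range_extend_eq_subcube hσ,
    ← image_univ,
    (extend_injective hσ c).image_injective.eq_iff]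

end Embedding

section Counting

variable {ℓ m n : ℕ} {j k : Fin m → Fin ℓ} {σ : Fin n → Fin ℓ}

structure IsCoordSplit (j k : Fin m → Fin ℓ) (σ : Fin n → Fin ℓ) : Prop where
  injective_left : Injective j
  injective_right : Injective k
  injective_free : Injective σ
  left_ne_right : ∀ q q', j q ≠ k q'
  range_free : range σ = (pairCoords j k univ)ᶜ

theorem exists_isCoordSplit (hj : Injective j) (hk : Injective k)
    (hjk : ∀ q q', j q ≠ k q') : ∃ σ : Fin (ℓ - 2 * m) → Fin ℓ, IsCoordSplit j k σ := by
  classical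
  set P := Finset.univ.image j ∪ Finset.univ.image k
  have hP : P.card = 2 * m := by
    rw [Finset.card_union_of_disjoint, Finset.card_image_of_injective _ hj,
      Finset.card_image_of_injective _ hk, Finset.card_univ, Fintype.card_fin, two_mul]
    refine Finset.disjoint_left.2 fun i h₁ h₂ => ?_
    obtain ⟨q, -, rfl⟩ := Finset.mem_image.1 h₁
    obtain ⟨q', -, h⟩ := Finset.mem_image.1 h₂
    exact hjk q q' h.symm
  have hF : Pᶜ.card = ℓ - 2 * m := by rw [Finset.card_compl, hP, Fintype.card_fin]
  refine ⟨Pᶜ.orderEmbOfFin hF, hj, hk, (Pᶜ.orderEmbOfFin hF).injective, hjk, ?_⟩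
  rw [Finset.range_orderEmbOfFin, Finset.coe_compl]
  congr 1
  ext
  simp [P, pairCoords]

noncomputable def pairVertex (j k : Fin m → Fin ℓ) (σ : Fin n → Fin ℓ)
    (e₁ e₂ : Fin m → Fin 2) (y : Fin n → Fin 2) : Fin ℓ → Fin 2 :=
  extend σ y (pairPattern j k e₁ e₂)

-- `x + 1` flips `x : Fin 2`
noncomputable def flipVertex (j k : Fin m → Fin ℓ) (σ : Fin n → Fin ℓ)
    (e₁ e₂ : Fin m → Fin 2) (g : Fin m → Fin n → Fin 2) (q : Fin m) : Fin ℓ → Fin 2 :=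
  pairVertex j k σ (update e₁ q (e₁ q + 1)) (update e₂ q (e₂ q + 1)) (g q)

noncomputable def pairConfig (j k : Fin m → Fin ℓ) (σ : Fin n → Fin ℓ)
    (e₁ e₂ : Fin m → Fin 2) (g : Fin m → Fin n → Fin 2) (T : Finset (Fin n → Fin 2)) :
    Finset (Fin ℓ → Fin 2) :=
  T.image (pairVertex j k σ e₁ e₂) ∪ Finset.univ.image (flipVertex j k σ e₁ e₂ g)

namespace IsCoordSplit

variable {e₁ e₂ : Fin m → Fin 2} {g : Fin m → Fin n → Fin 2} {y : Fin n → Fin 2}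
  {T : Finset (Fin n → Fin 2)}

theorem pairVertex_left (hs : IsCoordSplit j k σ) (q : Fin m) :
    pairVertex j k σ e₁ e₂ y (j q) = e₁ q := by
  have : j q ∉ range σ := by simp [hs.range_free, pairCoords]
  rw [pairVertex, extend_apply' _ _ _ this, pairPattern_left hs.injective_left]

theorem pairVertex_right (hs : IsCoordSplit j k σ) (q : Fin m) :
    pairVertex j k σ e₁ e₂ y (k q) = e₂ q := by
  have : k q ∉ range σ := by simp [hs.range_free, pairCoords]
  rw [pairVertex, extend_apply' _ _ _ this, pairPattern_right hs.injective_right hs.left_ne_right]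

theorem pairVertex_free (hs : IsCoordSplit j k σ) (s : Fin n) :
    pairVertex j k σ e₁ e₂ y (σ s) = y s :=
  hs.injective_free.extend_apply _ _ _

theorem pairVertex_eq_iff (hs : IsCoordSplit j k σ) {x : Fin ℓ → Fin 2} :
    pairVertex j k σ e₁ e₂ y = x ↔ x ∘ j = e₁ ∧ x ∘ k = e₂ ∧ x ∘ σ = y := by
  constructor
  · rintro rfl
    exact ⟨funext hs.pairVertex_left, funext hs.pairVertex_right, funext hs.pairVertex_free⟩
  · rintro ⟨rfl, rfl, rfl⟩
    funext i
    by_cases h : i ∈ range σ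
    · obtain ⟨s, rfl⟩ := h
      exact hs.pairVertex_free s
    · rw [hs.range_free, notMem_compl_iff] at h
      rcases h with ⟨q, -, rfl⟩ | ⟨q, -, rfl⟩
      exacts [hs.pairVertex_left q, hs.pairVertex_right q]

theorem mem_subcube_pairPattern_iff (hs : IsCoordSplit j k σ) {x : Fin ℓ → Fin 2} :
    x ∈ subcube (pairCoords j k univ) (pairPattern j k e₁ e₂) ↔ x ∘ j = e₁ ∧ x ∘ k = e₂ := by
  rw [mem_subcube_pairCoords]
  simp [pairPattern_left hs.injective_left, pairPattern_right hs.injective_right hs.left_ne_right,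
    funext_iff, forall_and]

theorem pairVertex_mem_subcube (hs : IsCoordSplit j k σ) :
    pairVertex j k σ e₁ e₂ y ∈ subcube (pairCoords j k univ) (pairPattern j k e₁ e₂) := by
  obtain ⟨h₁, h₂, -⟩ := hs.pairVertex_eq_iff.1 rfl
  exact hs.mem_subcube_pairPattern_iff.2 ⟨h₁, h₂⟩

theorem flipsPairs_flipVertex (hs : IsCoordSplit j k σ) :
    FlipsPairs j k (pairPattern j k e₁ e₂) (flipVertex j k σ e₁ e₂ g) := fun q => by
  simp only [mem_subcube_pairCoords, flipVertex, hs.pairVertex_left, hs.pairVertex_right,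
    pairPattern_left hs.injective_left, pairPattern_right hs.injective_right hs.left_ne_right,
    update_self]
  exact ⟨fun q' hq' => by simp [update_of_ne (show q' ≠ q from hq')], Fin.two_add_one_ne _,
    Fin.two_add_one_ne _⟩

theorem coe_pairConfig_inter_subcube (hs : IsCoordSplit j k σ) :
    ↑(pairConfig j k σ e₁ e₂ g T) ∩ subcube (pairCoords j k univ) (pairPattern j k e₁ e₂) =
      pairVertex j k σ e₁ e₂ '' ↑T := by
  ext x
  simp only [pairConfig, Finset.coe_union, Finset.coe_image, Finset.coe_univ, image_univ,
    mem_inter_iff, mem_union]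
  constructor
  · rintro ⟨hx | ⟨q, rfl⟩, hxD⟩
    · exact hx
    · exact absurd (subcube_pairCoords_univ_subset q hxD)
        (hs.flipsPairs_flipVertex.notMem_subcube_pair q)
  · rintro hx
    obtain ⟨y, -, rfl⟩ := id hx
    exact ⟨Or.inl hx, hs.pairVertex_mem_subcube⟩

theorem isPairConfig_pairConfig (hs : IsCoordSplit j k σ)
    (hT : bootClosure (gridAdj 2 n) 2 (↑T : Set (Fin n → Fin 2)) = univ) :
    IsPairConfig j k (pairPattern j k e₁ e₂) (flipVertex j k σ e₁ e₂ g)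
      ↑(pairConfig j k σ e₁ e₂ g T) where
  flipsPairs := hs.flipsPairs_flipVertex
  bootClosure_inter := by
    rw [hs.coe_pairConfig_inter_subcube, ← compl_compl (pairCoords j k univ), ← hs.range_free]
    exact (bootClosure_image_extend_eq_iff hs.injective_free _).2 hT
  subset_union := by
    intro x hx
    simp only [pairConfig, Finset.coe_union, Finset.coe_image, Finset.coe_univ, image_univ] at hx
    rcases hx with ⟨y, -, rfl⟩ | hx
    exacts [Or.inl hs.pairVertex_mem_subcube, Or.inr hx]
  range_subset := by
    rintro _ ⟨q, rfl⟩
    simp [pairConfig]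

theorem card_pairConfig (hs : IsCoordSplit j k σ) :
    (pairConfig j k σ e₁ e₂ g T).card = T.card + m := by
  have hinj : Injective (pairVertex j k σ e₁ e₂) := fun y y' h =>
    ((hs.pairVertex_eq_iff.1 h).2.2).symm.trans (hs.pairVertex_eq_iff.1 rfl).2.2
  rw [pairConfig, Finset.card_union_of_disjoint, Finset.card_image_of_injective _ hinj,
    Finset.card_image_of_injective _ hs.flipsPairs_flipVertex.injective, Finset.card_univ,
    Fintype.card_fin]
  refine Finset.disjoint_left.2 fun x hx hx' => ?_
  obtain ⟨y, -, rfl⟩ := Finset.mem_image.1 hx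
  obtain ⟨q, -, hq⟩ := Finset.mem_image.1 hx'
  exact hs.flipsPairs_flipVertex.notMem_subcube_pair q
    (subcube_pairCoords_univ_subset q (hq ▸ hs.pairVertex_mem_subcube))

theorem pairConfig_injective (hℓ : 3 ≤ ℓ) (hs : IsCoordSplit j k σ)
    {e₁' e₂' : Fin m → Fin 2} {g' : Fin m → Fin n → Fin 2} {T' : Finset (Fin n → Fin 2)}
    (hT : bootClosure (gridAdj 2 n) 2 (↑T : Set (Fin n → Fin 2)) = univ)
    (hT' : bootClosure (gridAdj 2 n) 2 (↑T' : Set (Fin n → Fin 2)) = univ)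
    (h : pairConfig j k σ e₁ e₂ g T = pairConfig j k σ e₁' e₂' g' T') :
    e₁ = e₁' ∧ e₂ = e₂' ∧ g = g' ∧ T = T' := by
  have hc := hs.isPairConfig_pairConfig (e₁ := e₁) (e₂ := e₂) (g := g) hT
  have hc' := hs.isPairConfig_pairConfig (e₁ := e₁') (e₂ := e₂') (g := g') hT'
  rw [← h] at hc'
  -- the faces of the final pairs are determined by the set
  have hface : ∀ q, e₁ q = e₁' q ∧ e₂ q = e₂' q := fun q => by
    obtain ⟨t, ht⟩ := Fin.exists_notMem_pair hℓ (j q) (k q)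
    obtain ⟨x, hx, hx'⟩ := (subcube_nontrivial (c := pairPattern j k e₁ e₂)
      ht).inter_nonempty_of_bootClosure_eq
      (hc.bootClosure_inter_subcube_pair hs.injective_left hs.injective_right hs.left_ne_right q)
      (hc'.diff_subcube_pair q)
    simp only [mem_subcube, mem_insert_iff, mem_singleton_iff, forall_eq_or_imp, forall_eq,
      pairPattern_left hs.injective_left, pairPattern_right hs.injective_right hs.left_ne_right]
      at hx hx'
    exact ⟨hx.1.symm.trans hx'.1, hx.2.symm.trans hx'.2⟩
  obtain rfl : e₁ = e₁' := funext fun q => (hface q).1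
  obtain rfl : e₂ = e₂' := funext fun q => (hface q).2
  refine ⟨rfl, rfl, funext fun q => ?_, ?_⟩
  · have ha := singleton_eq_singleton_iff.1
      ((hc.diff_subcube_pair q).symm.trans (hc'.diff_subcube_pair q))
    exact (hs.pairVertex_eq_iff.1 ha).2.2.symm.trans (hs.pairVertex_eq_iff.1 rfl).2.2
  · have hT := hs.coe_pairConfig_inter_subcube (e₁ := e₁) (e₂ := e₂) (g := g) (T := T)
    rw [h, hs.coe_pairConfig_inter_subcube] at hT
    exact Finset.coe_injective ((extend_injective hs.injective_free _).image_injective hT).symm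

theorem flipVertex_eq (hs : IsCoordSplit j k σ) {c : Fin ℓ → Fin 2} {a : Fin m → Fin ℓ → Fin 2}
    (ha : FlipsPairs j k c a) : flipVertex j k σ (c ∘ j) (c ∘ k) (fun q => a q ∘ σ) = a := by
  funext q
  refine hs.pairVertex_eq_iff.2 ⟨funext fun q' => ?_, funext fun q' => ?_, rfl⟩
  · by_cases hq : q' = q
    · subst hq
      simpa using Fin.two_eq_add_one_of_ne (ha q').2.1
    · simpa [update_of_ne hq] using ha.mem_subcube_pair (Ne.symm hq) (j q') (by simp)
  · by_cases hq : q' = q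
    · subst hq
      simpa using Fin.two_eq_add_one_of_ne (ha q').2.2
    · simpa [update_of_ne hq] using ha.mem_subcube_pair (Ne.symm hq) (k q') (by simp)

theorem exists_pairConfig_eq (hs : IsCoordSplit j k σ) {c : Fin ℓ → Fin 2}
    {a : Fin m → Fin ℓ → Fin 2} {A : Finset (Fin ℓ → Fin 2)} (h : IsPairConfig j k c a ↑A) :
    ∃ e₁ e₂ g, ∃ T : Finset (Fin n → Fin 2),
      bootClosure (gridAdj 2 n) 2 (↑T : Set (Fin n → Fin 2)) = univ ∧
      pairConfig j k σ e₁ e₂ g T = A := by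
  classical
  set D := subcube (pairCoords j k univ) c
  have hD : subcube (pairCoords j k univ) (pairPattern j k (c ∘ j) (c ∘ k)) = D := by
    ext x
    rw [hs.mem_subcube_pairPattern_iff, mem_subcube_pairCoords]
    simp [funext_iff, forall_and]
  set T := Finset.univ.filter fun y => pairVertex j k σ (c ∘ j) (c ∘ k) y ∈ A
  have hT : pairVertex j k σ (c ∘ j) (c ∘ k) '' ↑T = ↑A ∩ D := by
    ext x
    constructor
    · rintro ⟨y, hy, rfl⟩
      exact ⟨(Finset.mem_filter.1 hy).2, hD ▸ hs.pairVertex_mem_subcube⟩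
    · rintro ⟨hxA, hxD⟩
      obtain ⟨h₁, h₂⟩ := hs.mem_subcube_pairPattern_iff.1 (hD ▸ hxD)
      have hx : pairVertex j k σ (c ∘ j) (c ∘ k) (x ∘ σ) = x := hs.pairVertex_eq_iff.2 ⟨h₁, h₂, rfl⟩
      exact ⟨x ∘ σ, Finset.mem_filter.2 ⟨Finset.mem_univ _, by rwa [hx]⟩, hx⟩
  refine ⟨c ∘ j, c ∘ k, fun q => a q ∘ σ, T, ?_, Finset.coe_injective ?_⟩
  · rw [← bootClosure_image_extend_eq_iff hs.injective_free, hs.range_free, compl_compl]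
    exact (congrArg _ hT).trans (h.bootClosure_inter.trans hD.symm)
  · simp only [pairConfig, Finset.coe_union, Finset.coe_image, Finset.coe_univ, image_univ]
    rw [hT, hs.flipVertex_eq h.flipsPairs]
    exact (union_subset inter_subset_left h.range_subset).antisymm
      fun x hx => (h.subset_union hx).imp (fun hxD => ⟨hx, hxD⟩) id

end IsCoordSplit

end Counting

section Probability

theorem binProb_eq_sum_filter {V : Type*} [Fintype V] (p : ℝ) (E : Finset V → Prop)
    [DecidablePred E] :
    binProb p E = ∑ A ∈ Finset.univ.filter E, p ^ A.card * (1 - p) ^ (Fintype.card V - A.card) := by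
  rw [binProb, Finset.sum_filter]
  exact Finset.sum_congr rfl fun A _ => by simp [Set.indicator_apply]

theorem sum_filter_pow_mul_pow_eq_binProb {V : Type*} [Fintype V] (p : ℝ) (E : Finset V → Prop)
    [DecidablePred E] {m N : ℕ} (h : Fintype.card V + m ≤ N) :
    ∑ T ∈ Finset.univ.filter E, p ^ (T.card + m) * (1 - p) ^ (N - (T.card + m)) =
      p ^ m * (1 - p) ^ (N - Fintype.card V - m) * binProb p E := by
  rw [binProb_eq_sum_filter, Finset.mul_sum]
  refine Finset.sum_congr rfl fun T _ => ?_
  have hT := T.card_le_univ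
  rw [show N - (T.card + m) = (N - Fintype.card V - m) + (Fintype.card V - T.card) by omega,
    pow_add, pow_add]
  ring

end Probability

open Classical in
theorem IsCoordSplit.sum_filter_finalPair {ℓ m n : ℕ} [NeZero m] {j k : Fin m → Fin ℓ}
    {σ : Fin n → Fin ℓ} (hℓ : 3 ≤ ℓ) (hs : IsCoordSplit j k σ) (f : ℕ → ℝ) :
    ∑ A ∈ Finset.univ.filter
        (fun A : Finset (Fin ℓ → Fin 2) => ∀ q, FinalPair 2 ℓ ↑A univ (j q) (k q)), f A.card =
      ∑ x ∈ (Finset.univ : Finset ((Fin m → Fin 2) × (Fin m → Fin 2) × (Fin m → Fin n → Fin 2)))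
          ×ˢ Finset.univ.filter
            (fun T : Finset (Fin n → Fin 2) => bootClosure (gridAdj 2 n) 2 ↑T = univ),
        f (x.2.card + m) := by
  refine (Finset.sum_bij (fun x _ => pairConfig j k σ x.1.1 x.1.2.1 x.1.2.2 x.2)
    (fun x hx => ?_) (fun x hx x' hx' h => ?_) (fun A hA => ?_)
    (fun x _ => by rw [hs.card_pairConfig])).symm
  · simp only [Finset.mem_product, Finset.mem_filter, Finset.mem_univ, true_and] at hx ⊢
    exact (hs.isPairConfig_pairConfig hx).finalPair hs.injective_left hs.injective_right
      hs.left_ne_right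
  · simp only [Finset.mem_product, Finset.mem_filter, Finset.mem_univ, true_and] at hx hx'
    obtain ⟨h₁, h₂, h₃, h₄⟩ := hs.pairConfig_injective hℓ hx hx' h
    exact Prod.ext (Prod.ext h₁ (Prod.ext h₂ h₃)) h₄
  · simp only [Finset.mem_filter, Finset.mem_univ, true_and] at hA
    obtain ⟨c, a, hA⟩ := exists_isPairConfig hs.injective_left hs.injective_right
      hs.left_ne_right hA
    obtain ⟨e₁, e₂, g, T, hT, rfl⟩ := hs.exists_pairConfig_eq hA
    exact ⟨((e₁, e₂, g), T), by simpa using hT, rfl⟩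

theorem IsCoordSplit.binProb_forall_finalPair {ℓ m n : ℕ} [NeZero m] {j k : Fin m → Fin ℓ}
    {σ : Fin n → Fin ℓ} (hℓ : 3 ≤ ℓ) (hs : IsCoordSplit j k σ) (p : ℝ) :
    binProb p (fun A : Finset (Fin ℓ → Fin 2) => ∀ q, FinalPair 2 ℓ ↑A univ (j q) (k q)) =
      (2 ^ m * 2 ^ m * (2 ^ n) ^ m : ℕ) * (p ^ m * (1 - p) ^ (2 ^ ℓ - 2 ^ n - m) * Pprob n p) := by
  classical
  -- `pairConfig` with `T = univ` consists of `2 ^ n + m` distinct vertices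
  have hcard : Fintype.card (Fin n → Fin 2) + m ≤ 2 ^ ℓ := by
    simpa [hs.card_pairConfig] using (pairConfig j k σ 0 0 0 Finset.univ).card_le_univ
  rw [binProb_eq_sum_filter, Fintype.card_fun, Fintype.card_fin, Fintype.card_fin,
    hs.sum_filter_finalPair hℓ fun a => p ^ a * (1 - p) ^ (2 ^ ℓ - a), Finset.sum_product]
  dsimp only
  rw [Finset.sum_const, Finset.card_univ, nsmul_eq_mul, sum_filter_pow_mul_pow_eq_binProb p _ hcard,
    Pprob]
  simp only [Fintype.card_prod, Fintype.card_fun, Fintype.card_fin]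
  push_cast
  ring

theorem exists_mem_inter_of_not_injective {ℓ m : ℕ} {j k : Fin m → Fin ℓ}
    (hjk : ∀ q, j q ≠ k q)
    (hpairs : ∀ q q', q ≠ q' → ({j q, k q} : Finset (Fin ℓ)) ≠ {j q', k q'})
    (h : ¬(Injective j ∧ Injective k ∧ ∀ q q', j q ≠ k q')) :
    ∃ q q' i, i ∈ ({j q, k q} : Set (Fin ℓ)) ∩ {j q', k q'} ∧
      ∃ t ∈ ({j q', k q'} : Set (Fin ℓ)), t ∉ ({j q, k q} : Set (Fin ℓ)) := by
  obtain ⟨q, q', hne, i, hi⟩ :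
      ∃ q q', q ≠ q' ∧ ∃ i, i ∈ ({j q, k q} : Set (Fin ℓ)) ∩ {j q', k q'} := by
    simp only [Injective, not_and_or, not_forall] at h
    rcases h with ⟨q, q', hq, hne⟩ | ⟨q, q', hq, hne⟩ | ⟨q, q', hq⟩
    · exact ⟨q, q', hne, j q, by simp [hq]⟩
    · exact ⟨q, q', hne, k q, by simp [hq]⟩
    · rw [not_not] at hq
      exact ⟨q, q', by rintro rfl; exact hjk q hq, j q, by simp [hq]⟩
  refine ⟨q, q', i, hi, ?_⟩
  by_contra! ht
  have h₁ := ht (j q') (by simp)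
  have h₂ := ht (k q') (by simp)
  simp only [mem_insert_iff, mem_singleton_iff] at h₁ h₂
  apply hpairs q q' hne
  rcases h₁ with h₁ | h₁ <;> rcases h₂ with h₂ | h₂
  · exact absurd (h₁.trans h₂.symm) (hjk q')
  · rw [h₁, h₂]
  · rw [h₁, h₂, Finset.pair_comm]
  · exact absurd (h₁.trans h₂.symm) (hjk q')

theorem M_intersection_prob_general (ℓ m : ℕ) (hℓ : 3 ≤ ℓ) (hm : 1 ≤ m)
    (j k : Fin m → Fin ℓ) (hjk : ∀ q, j q ≠ k q)
    (hpairs : ∀ q q', q ≠ q' → ({j q, k q} : Finset (Fin ℓ)) ≠ {j q', k q'})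
    (p : ℝ) :
    ((Function.Injective j ∧ Function.Injective k ∧ ∀ q q', j q ≠ k q') →
      binProb p (fun A : Finset (Fin ℓ → Fin 2) =>
          ∀ q, FinalPair 2 ℓ (↑A : Set (Fin ℓ → Fin 2)) Set.univ (j q) (k q)) =
        (2 : ℝ) ^ (2 * m) * ((2 : ℝ) ^ (ℓ - 2 * m)) ^ m * p ^ m *
          (1 - p) ^ (2 ^ ℓ - 2 ^ (ℓ - 2 * m) - m) * Pprob (ℓ - 2 * m) p) ∧
    (¬(Function.Injective j ∧ Function.Injective k ∧ ∀ q q', j q ≠ k q') →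
      binProb p (fun A : Finset (Fin ℓ → Fin 2) =>
          ∀ q, FinalPair 2 ℓ (↑A : Set (Fin ℓ → Fin 2)) Set.univ (j q) (k q)) = 0) := by
  classical
  refine ⟨fun ⟨hj, hk, hjk'⟩ => ?_, fun h => ?_⟩
  · have : NeZero m := ⟨by omega⟩
    obtain ⟨σ, hs⟩ := exists_isCoordSplit hj hk hjk'
    rw [hs.binProb_forall_finalPair hℓ p]
    push_cast
    ring
  · obtain ⟨q, q', i, hi, t, ht, ht'⟩ := exists_mem_inter_of_not_injective hjk hpairs h
    rw [binProb_eq_sum_filter, Finset.filter_false_of_mem fun A _ hA =>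
      not_finalPair_of_mem_of_notMem hi ht ht' (hA q) (hA q'), Finset.sum_empty]

/-- The probability of an intersection of final-pair events
`M_ℓ(j_q,k_q)`. -/
theorem M_intersection_prob (ℓ m : ℕ) (hℓ : 3 ≤ ℓ) (hm : 1 ≤ m) (h2m : 2 * m ≤ ℓ)
    (j k : Fin m → Fin ℓ) (hjk : ∀ q, j q ≠ k q)
    (hpairs : ∀ q q', q ≠ q' → ({j q, k q} : Finset (Fin ℓ)) ≠ {j q', k q'})
    (p : ℝ) (hp : 0 < p) :
    ((Function.Injective j ∧ Function.Injective k ∧ ∀ q q', j q ≠ k q') →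
      binProb p (fun A : Finset (Fin ℓ → Fin 2) =>
          ∀ q, FinalPair 2 ℓ (↑A : Set (Fin ℓ → Fin 2)) Set.univ (j q) (k q)) =
        (2 : ℝ) ^ (2 * m) * ((2 : ℝ) ^ (ℓ - 2 * m)) ^ m * p ^ m *
          (1 - p) ^ (2 ^ ℓ - 2 ^ (ℓ - 2 * m) - m) * Pprob (ℓ - 2 * m) p) ∧
    (¬(Function.Injective j ∧ Function.Injective k ∧ ∀ q q', j q ≠ k q') →
      binProb p (fun A : Finset (Fin ℓ → Fin 2) =>
          ∀ q, FinalPair 2 ℓ (↑A : Set (Fin ℓ → Fin 2)) Set.univ (j q) (k q)) = 0) :=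
  M_intersection_prob_general ℓ m hℓ hm j k hjk hpairs p
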